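/- arXiv:2402.04155 — 4 statements merged into one kernel-verified Lean document; each statement's English description precedes it below -/
import Mathlib

section
/- Let E be a directed graph, R a unital commutative ring, and f : T_E* → L(R) a saturated function. If (H₁,S₁), (H₂,S₂), (𝔥,𝔰) are admissible pairs in T_E* with (𝔥,𝔰) = (H₁,S₁) ∨ (H₂,S₂), then ⋂_{u∈𝔥} φ_f(u) ∩ ⋂_{v∈𝔰} φ_f(v^𝔥) = (⋂_{u₁∈H₁} φ_f(u₁) ∩ ⋂_{v₁∈S₁} φ_f(v₁^{H₁})) ∩ (⋂_{u₂∈H₂} φ_f(u₂) ∩ ⋂_{v₂∈S₂} φ_f(v₂^{H₂})). -/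
namespace LPAQuot

/-- A directed graph `E = (E⁰, E¹, s, r)` with vertex type `V` and edge type `E`. -/
structure Graph (V E : Type) where
  s : E → V
  r : E → V

namespace Graph

variable {V E R : Type} [CommRing R] (G : Graph V E)

/-- `u` reaches `w` through a (possibly trivial) path. -/
def Reaches (u w : V) : Prop :=
  Relation.ReflTransGen (fun a b => ∃ e, G.s e = a ∧ G.r e = b) u w

/-- A set of vertices is hereditary if it is closed under ranges of paths. -/
def IsHereditary (H : Set V) : Prop :=
  ∀ ⦃u w : V⦄, u ∈ H → G.Reaches u w → w ∈ H

/-- A vertex is regular if `0 < |s⁻¹(v)| < ∞`. -/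
def IsRegular (v : V) : Prop :=
  {e | G.s e = v}.Finite ∧ {e | G.s e = v}.Nonempty

/-- A vertex is an infinite emitter if `|s⁻¹(v)| = ∞`. -/
def IsInfiniteEmitter (v : V) : Prop := {e | G.s e = v}.Infinite

/-- A hereditary set is saturated if every regular vertex all of whose emitted
edges have range in `H` lies in `H`. -/
def IsSaturated (H : Set V) : Prop :=
  ∀ ⦃v : V⦄, G.IsRegular v → (∀ e, G.s e = v → G.r e ∈ H) → v ∈ H

/-- Hereditary and saturated. -/
def IsHS (H : Set V) : Prop := G.IsHereditary H ∧ G.IsSaturated H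

/-- `v` is a breaking vertex of `H`: an infinite emitter `v ∉ H` with
`0 < |s⁻¹(v) ∩ r⁻¹(E⁰∖H)| < ∞`. -/
def IsBreaking (H : Set V) (v : V) : Prop :=
  G.IsInfiniteEmitter v ∧ v ∉ H ∧
    {e | G.s e = v ∧ G.r e ∉ H}.Finite ∧ {e | G.s e = v ∧ G.r e ∉ H}.Nonempty

/-- `H'` is `S`-closed: if `v ∈ S` and `r(s⁻¹(v)) ⊆ H'` then `v ∈ H'`. -/
def SClosed (S H' : Set V) : Prop :=
  ∀ v ∈ S, (∀ e, G.s e = v → G.r e ∈ H') → v ∈ H'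

/-- The `S`-saturation of `H`: the smallest hereditary saturated `S`-closed set
containing `H`. -/
def SSat (H S : Set V) : Set V :=
  ⋂₀ {H' | H ⊆ H' ∧ G.IsHS H' ∧ G.SClosed S H'}

/-- `H_v`, the intersection of all hereditary saturated sets containing `v`. -/
def Hv (v : V) : Set V := ⋂₀ {H | G.IsHS H ∧ v ∈ H}

lemma mem_Hv (v : V) : v ∈ G.Hv v := by
  simp only [Hv, Set.mem_sInter, Set.mem_setOf_eq]
  exact fun H hH => hH.2

lemma Hv_hereditary (v : V) : G.IsHereditary (G.Hv v) := by
  intro u w hu hw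
  simp only [Hv, Set.mem_sInter, Set.mem_setOf_eq] at hu ⊢
  exact fun H hH => hH.1.1 (hu H hH) hw

lemma Hv_saturated (v : V) : G.IsSaturated (G.Hv v) := by
  intro w hw hr
  simp only [Hv, Set.mem_sInter, Set.mem_setOf_eq]
  intro H hH
  refine hH.1.2 hw fun e he => ?_
  have h := hr e he
  simp only [Hv, Set.mem_sInter, Set.mem_setOf_eq] at h
  exact h H hH

/-- An admissible pair `(H, S)` other than `(∅, ∅)`; i.e. an element of `T_E^*`. -/
structure APair (Γ : Graph V E) where
  H : Set V
  S : Set V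
  hered : Γ.IsHereditary H
  sat : Γ.IsSaturated H
  breaking : ∀ v ∈ S, Γ.IsBreaking H v
  nontrivial : H.Nonempty ∨ S.Nonempty

/-- The first component `𝔥` of the join of a family of admissible pairs:
the `(⋃ᵢ Sᵢ)`-saturation of `⋃ᵢ Hᵢ`. -/
def joinH {ι : Type} (P : ι → G.APair) : Set V :=
  G.SSat (⋃ i, (P i).H) (⋃ i, (P i).S)

/-- The second component `𝔰 = (⋃ᵢ Sᵢ) ∖ 𝔥` of the join of a family of admissible pairs. -/
def joinS {ι : Type} (P : ι → G.APair) : Set V :=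
  (⋃ i, (P i).S) \ G.joinH P

/-- First component of the binary join `(H₁,S₁) ∨ (H₂,S₂)`. -/
def join2H (p₁ p₂ : G.APair) : Set V := G.SSat (p₁.H ∪ p₂.H) (p₁.S ∪ p₂.S)

/-- Second component of the binary join `(H₁,S₁) ∨ (H₂,S₂)`. -/
def join2S (p₁ p₂ : G.APair) : Set V := (p₁.S ∪ p₂.S) \ G.join2H p₁ p₂

/-- A saturated function `f : T_E^* → L(R)`:
`f(⋁ᵢ (Hᵢ,Sᵢ)) = ⋂ᵢ f((Hᵢ,Sᵢ))` for every family of admissible pairs. -/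
def IsSaturatedFun (f : G.APair → Ideal R) : Prop :=
  ∀ (ι : Type) (P : ι → G.APair) (q : G.APair),
    q.H = G.joinH P → q.S = G.joinS P → f q = ⨅ i, f (P i)

/-- The set `Ê⁰` of extended vertices: vertices together with symbols `v^H`
for `H` hereditary saturated and `v ∈ B_H`. -/
abbrev ExtVertex (Γ : Graph V E) : Type :=
  V ⊕ {p : Set V × V // Γ.IsHS p.1 ∧ Γ.IsBreaking p.1 p.2}

/-- The admissible pair `(H_u, ∅)`. -/
def pairOfVertex (u : V) : G.APair where
  H := G.Hv u
  S := ∅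
  hered := G.Hv_hereditary u
  sat := G.Hv_saturated u
  breaking := fun v hv => absurd hv (Set.notMem_empty v)
  nontrivial := Or.inl ⟨u, G.mem_Hv u⟩

/-- The admissible pair `(H, {v})` for `v ∈ B_H`. -/
def pairOfBreaking (H : Set V) (v : V) (hH : G.IsHS H) (hv : G.IsBreaking H v) :
    G.APair where
  H := H
  S := {v}
  hered := hH.1
  sat := hH.2
  breaking := fun w hw => by
    rw [Set.mem_singleton_iff] at hw
    subst hw
    exact hv
  nontrivial := Or.inr ⟨v, rfl⟩

/-- The function `φ_f : Ê⁰ → L(R)` associated to a saturated function `f`: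
`φ_f(u) = f((H_u, ∅))` and `φ_f(v^H) = f((H, {v}))`. -/
def phiOf (f : G.APair → Ideal R) : G.ExtVertex → Ideal R :=
  Sum.elim (fun u => f (G.pairOfVertex u))
    (fun p => f (G.pairOfBreaking p.1.1 p.1.2 p.2.1 p.2.2))

/-- `⋂_{u∈H} φ(u) ∩ ⋂_{v∈S} φ(v^H)`, that is, `f_φ((H,S))`. -/
def phiPair (φ : G.ExtVertex → Ideal R) (p : G.APair) : Ideal R :=
  (⨅ u : p.H, φ (Sum.inl u.1)) ⊓
    ⨅ v : p.S, φ (Sum.inr ⟨(p.H, v.1), ⟨p.hered, p.sat⟩, p.breaking v.1 v.2⟩)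

/-- The function `f_φ : T_E^* → L(R)` associated to `φ : Ê⁰ → L(R)`. -/
def satFunOf (φ : G.ExtVertex → Ideal R) : G.APair → Ideal R :=
  fun p => G.phiPair φ p

/-- A graded ideal function `φ : Ê⁰ → L(R)`: it satisfies
(i) `⋂_{u∈𝔥} φ(u) ∩ ⋂_{v∈𝔰} φ(v^𝔥)` splits over binary joins,
(ii) `H_v ⊆ H_u` implies `φ(u) ⊆ φ(v)`,
(iii) `φ(v^H) ⊆ ⋂_{w∈H} φ(w)`. -/
def IsGradedIdealFun (φ : G.ExtVertex → Ideal R) : Prop :=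
  (∀ p₁ p₂ q : G.APair, q.H = G.join2H p₁ p₂ → q.S = G.join2S p₁ p₂ →
      G.phiPair φ q = G.phiPair φ p₁ ⊓ G.phiPair φ p₂) ∧
  (∀ u v : V, G.Hv v ⊆ G.Hv u → φ (Sum.inl u) ≤ φ (Sum.inl v)) ∧
  (∀ (H : Set V) (hH : G.IsHS H) (v : V) (hv : G.IsBreaking H v),
      φ (Sum.inr ⟨(H, v), hH, hv⟩) ≤ ⨅ w : H, φ (Sum.inl w.1))

/-- The extended order `x ≥ y` on `Ê⁰`: on vertices it is the path order, each
breaking vertex `v` lies above the symbol `v^H`, and the symbols `v^H` are sinks. -/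
def extGE (Γ : Graph V E) : Γ.ExtVertex → Γ.ExtVertex → Prop
  | Sum.inl u, Sum.inl w => Γ.Reaches u w
  | Sum.inl u, Sum.inr p => Γ.Reaches u p.1.2
  | Sum.inr _, Sum.inl _ => False
  | Sum.inr p, Sum.inr q => p = q

lemma subset_SSat (H S : Set V) : H ⊆ G.SSat H S :=
  Set.subset_sInter fun _ hH' => hH'.1

lemma SSat_eq_self {K S : Set V} (hK : G.IsHS K) (hS : G.SClosed S K) : G.SSat K S = K :=
  Set.Subset.antisymm (Set.sInter_subset_of_mem ⟨subset_rfl, hK, hS⟩) (G.subset_SSat K S)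

lemma Hv_subset {H : Set V} (hH : G.IsHS H) {u : V} (hu : u ∈ H) : G.Hv u ⊆ H :=
  Set.sInter_subset_of_mem ⟨hH, hu⟩

lemma sClosed_of_forall_isBreaking {H S : Set V} (hS : ∀ v ∈ S, G.IsBreaking H v) :
    G.SClosed S H := by
  intro v hv hall
  obtain ⟨e, he, hre⟩ := (hS v hv).2.2.2
  exact absurd (hall e he) hre

/-- `(H, S)` is the join of the `(H_u, ∅)` for `u ∈ H` and the `(H, {v})` for `v ∈ S`. -/
def basicPairs (p : G.APair) : p.H ⊕ p.S → G.APair :=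
  Sum.elim (fun u => G.pairOfVertex u.1)
    (fun v => G.pairOfBreaking p.H v.1 ⟨p.hered, p.sat⟩ (p.breaking v.1 v.2))

lemma iUnion_basicPairs_H (p : G.APair) : ⋃ i, (G.basicPairs p i).H = p.H := by
  refine Set.Subset.antisymm (Set.iUnion_subset fun i => ?_) fun u hu => ?_
  · rcases i with u | v
    · exact G.Hv_subset ⟨p.hered, p.sat⟩ u.2
    · exact subset_rfl
  · exact Set.mem_iUnion.2 ⟨Sum.inl ⟨u, hu⟩, G.mem_Hv u⟩

lemma iUnion_basicPairs_S (p : G.APair) : ⋃ i, (G.basicPairs p i).S = p.S := by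
  refine Set.Subset.antisymm (Set.iUnion_subset fun i => ?_) fun v hv => ?_
  · rcases i with u | v
    · exact Set.empty_subset _
    · exact Set.singleton_subset_iff.2 v.2
  · exact Set.mem_iUnion.2 ⟨Sum.inr ⟨v, hv⟩, rfl⟩

lemma joinH_basicPairs (p : G.APair) : G.joinH (G.basicPairs p) = p.H := by
  rw [joinH, iUnion_basicPairs_H, iUnion_basicPairs_S]
  exact G.SSat_eq_self ⟨p.hered, p.sat⟩ (G.sClosed_of_forall_isBreaking p.breaking)

lemma joinS_basicPairs (p : G.APair) : G.joinS (G.basicPairs p) = p.S := by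
  rw [joinS, joinH_basicPairs, iUnion_basicPairs_S]
  exact (Set.disjoint_left.2 fun v hv => (p.breaking v hv).2.1).sdiff_eq_left

lemma phiPair_phiOf {f : G.APair → Ideal R} (hf : G.IsSaturatedFun f) (p : G.APair) :
    G.phiPair (G.phiOf f) p = f p := by
  rw [hf _ (G.basicPairs p) p (G.joinH_basicPairs p).symm (G.joinS_basicPairs p).symm, iInf_sum]
  rfl

lemma joinH_cond (p₁ p₂ : G.APair) : G.joinH (fun b => cond b p₁ p₂) = G.join2H p₁ p₂ := by
  rw [joinH, join2H, Set.union_eq_iUnion, Set.union_eq_iUnion (s₁ := p₁.S)]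
  simp only [Bool.apply_cond]

lemma joinS_cond (p₁ p₂ : G.APair) : G.joinS (fun b => cond b p₁ p₂) = G.join2S p₁ p₂ := by
  rw [joinS, join2S, joinH_cond, Set.union_eq_iUnion (s₁ := p₁.S)]
  simp only [Bool.apply_cond]

variable {G} in
lemma IsSaturatedFun.map_join2 {f : G.APair → Ideal R} (hf : G.IsSaturatedFun f)
    {p₁ p₂ q : G.APair} (hH : q.H = G.join2H p₁ p₂) (hS : q.S = G.join2S p₁ p₂) :
    f q = f p₁ ⊓ f p₂ := by
  rw [hf Bool _ q (hH.trans (G.joinH_cond p₁ p₂).symm) (hS.trans (G.joinS_cond p₁ p₂).symm),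
    iInf_bool_eq]
  rfl

/-- For a saturated function `f`, if `(𝔥,𝔰) = (H₁,S₁) ∨ (H₂,S₂)` then
`⋂_{u∈𝔥} φ_f(u) ∩ ⋂_{v∈𝔰} φ_f(v^𝔥)
  = (⋂_{u₁∈H₁} φ_f(u₁) ∩ ⋂_{v₁∈S₁} φ_f(v₁^{H₁})) ∩ (⋂_{u₂∈H₂} φ_f(u₂) ∩ ⋂_{v₂∈S₂} φ_f(v₂^{H₂}))`. -/
theorem statement_0 (f : G.APair → Ideal R) (hf : G.IsSaturatedFun f)
    (p₁ p₂ q : G.APair) (hH : q.H = G.join2H p₁ p₂) (hS : q.S = G.join2S p₁ p₂) :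
    G.phiPair (G.phiOf f) q = G.phiPair (G.phiOf f) p₁ ⊓ G.phiPair (G.phiOf f) p₂ := by
  simpa only [G.phiPair_phiOf hf] using hf.map_join2 hH hS

end Graph

end LPAQuot
end

section
/- Let E be a directed graph and R a unital commutative ring. Given a graded ideal function φ : Ê⁰ → L(R), the function f_φ : T_E* → L(R) defined by f_φ((H,S)) = ⋂_{u∈H} φ(u) ∩ ⋂_{v∈S} φ(v^H) is a saturated function. -/
namespace LPAQuot

namespace Graph

variable {V E R : Type} [CommRing R] (G : Graph V E)

/-!
Order the admissible pairs by `(H, S) ≤ (H', S')` iff `H ⊆ H'` and `S ⊆ H' ∪ S'`; the binary join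
is then a supremum, and axiom (i) says exactly that `f_φ` turns binary suprema into intersections.
This gives `f_φ(⋁ᵢ Pᵢ) ⊆ f_φ(Pᵢ)` at once, since `𝔮 = 𝔮 ∨ Pᵢ` for the join `𝔮`. Conversely, for
`I = ⋂ᵢ f_φ(Pᵢ)` the set of vertices `u` with `I ⊆ φ(u)` contains every `Hᵢ` and is hereditary,
saturated and `(⋃ᵢ Sᵢ)`-closed: to add a vertex `v` one only has to join finitely many pairs
(one for each edge out of `v`), and finite joins are controlled by (i). So it contains `𝔥`. Finally,
a symbol `v^𝔥` with `v ∈ Sᵢ` is handled by writing `(𝔥, {v}) = (Hᵢ, {v}) ∨ (𝔥, ∅)`.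
-/

open Set

lemma isHS_sInter {𝒦 : Set (Set V)} (h𝒦 : ∀ K ∈ 𝒦, G.IsHS K) : G.IsHS (⋂₀ 𝒦) :=
  ⟨fun _ _ hu huw => mem_sInter.2 fun K hK => (h𝒦 K hK).1 (hu K hK) huw,
    fun _ hreg hr => mem_sInter.2 fun K hK => (h𝒦 K hK).2 hreg fun e he => hr e he K hK⟩

lemma sClosed_sInter {S : Set V} {𝒦 : Set (Set V)} (h𝒦 : ∀ K ∈ 𝒦, G.SClosed S K) :
    G.SClosed S (⋂₀ 𝒦) :=
  fun v hv hr => mem_sInter.2 fun K hK => h𝒦 K hK v hv fun e he => hr e he K hK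

lemma subset_sSat (X S : Set V) : X ⊆ G.SSat X S :=
  subset_sInter fun _ hK => hK.1

lemma sSat_isHS (X S : Set V) : G.IsHS (G.SSat X S) :=
  G.isHS_sInter fun _ hK => hK.2.1

lemma sSat_sClosed (X S : Set V) : G.SClosed S (G.SSat X S) :=
  G.sClosed_sInter fun _ hK => hK.2.2

lemma sSat_subset {X S K : Set V} (hXK : X ⊆ K) (hK : G.IsHS K) (hSK : G.SClosed S K) :
    G.SSat X S ⊆ K :=
  sInter_subset_of_mem ⟨hXK, hK, hSK⟩

lemma Hv_subset_s3 {K : Set V} {v : V} (hK : G.IsHS K) (hv : v ∈ K) : G.Hv v ⊆ K :=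
  sInter_subset_of_mem ⟨hK, hv⟩

lemma Hv_isHS (v : V) : G.IsHS (G.Hv v) := ⟨G.Hv_hereditary v, G.Hv_saturated v⟩

lemma Hv_subset_of_reaches {u w : V} (h : G.Reaches u w) : G.Hv w ⊆ G.Hv u :=
  G.Hv_subset_s3 (G.Hv_isHS u) (G.Hv_hereditary u (G.mem_Hv u) h)

section

variable {G}

lemma IsBreaking.of_subset {H K : Set V} {v : V} (hv : G.IsBreaking H v) (hHK : H ⊆ K)
    (hvK : v ∉ K) (hcl : (∀ e, G.s e = v → G.r e ∈ K) → v ∈ K) : G.IsBreaking K v :=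
  ⟨hv.1, hvK, hv.2.2.1.subset fun _ he => ⟨he.1, fun h => he.2 (hHK h)⟩,
    by_contra fun hne => hvK (hcl fun e he => by_contra fun hre => hne ⟨e, he, hre⟩)⟩

namespace APair

lemma isHS (p : G.APair) : G.IsHS p.H := ⟨p.hered, p.sat⟩

lemma ext {p q : G.APair} (hH : p.H = q.H) (hS : p.S = q.S) : p = q := by
  cases p; cases q; cases hH; cases hS; rfl

lemma sClosed_of_subset (p : G.APair) {S : Set V} (hS : S ⊆ p.H ∪ p.S) : G.SClosed S p.H :=
  fun v hv hr => (hS hv).elim id fun hvS =>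
    let ⟨e, he, hre⟩ := (p.breaking v hvS).2.2.2
    (hre (hr e he)).elim

instance : PartialOrder G.APair where
  le p q := p.H ⊆ q.H ∧ p.S ⊆ q.H ∪ q.S
  le_refl _ := ⟨subset_rfl, subset_union_right⟩
  le_trans _ _ _ hpq hqr :=
    ⟨hpq.1.trans hqr.1, hpq.2.trans (union_subset (hqr.1.trans subset_union_left) hqr.2)⟩
  le_antisymm p q hpq hqp := by
    refine ext (hpq.1.antisymm hqp.1) (subset_antisymm ?_ ?_)
    · exact fun v hv => (hpq.2 hv).resolve_left fun hvq => (p.breaking v hv).2.1 (hqp.1 hvq)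
    · exact fun v hv => (hqp.2 hv).resolve_left fun hvp => (q.breaking v hv).2.1 (hpq.1 hvp)

lemma le_def {p q : G.APair} : p ≤ q ↔ p.H ⊆ q.H ∧ p.S ⊆ q.H ∪ q.S := Iff.rfl

lemma le_of_eq_sSat {p q : G.APair} {X S : Set V} (hH : q.H = G.SSat X S)
    (hS : q.S = S \ G.SSat X S) (hX : p.H ⊆ X) (hpS : p.S ⊆ S) : p ≤ q := by
  refine ⟨hX.trans (hH ▸ G.subset_sSat X S), fun v hv => ?_⟩
  by_cases hvq : v ∈ q.H
  · exact Or.inl hvq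
  · exact Or.inr (hS ▸ ⟨hpS hv, hH ▸ hvq⟩)

def sup (p q : G.APair) : G.APair where
  H := G.join2H p q
  S := G.join2S p q
  hered := (G.sSat_isHS _ _).1
  sat := (G.sSat_isHS _ _).2
  breaking v hv := by
    obtain ⟨hvS, hvH⟩ := hv
    have hcl := G.sSat_sClosed (p.H ∪ q.H) (p.S ∪ q.S) v hvS
    rcases hvS with hvS | hvS
    · exact (p.breaking v hvS).of_subset (subset_union_left.trans (G.subset_sSat _ _)) hvH hcl
    · exact (q.breaking v hvS).of_subset (subset_union_right.trans (G.subset_sSat _ _)) hvH hcl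
  nontrivial := by
    rcases p.nontrivial with ⟨u, hu⟩ | ⟨v, hv⟩
    · exact Or.inl ⟨u, G.subset_sSat _ _ (Or.inl hu)⟩
    · by_cases hvH : v ∈ G.join2H p q
      · exact Or.inl ⟨v, hvH⟩
      · exact Or.inr ⟨v, Or.inl hv, hvH⟩

instance : SemilatticeSup G.APair where
  sup := sup
  le_sup_left _ _ := le_of_eq_sSat rfl rfl subset_union_left subset_union_left
  le_sup_right _ _ := le_of_eq_sSat rfl rfl subset_union_right subset_union_right
  sup_le _ _ r hpr hqr :=
    ⟨G.sSat_subset (union_subset hpr.1 hqr.1) r.isHS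
        (r.sClosed_of_subset (union_subset hpr.2 hqr.2)),
      sdiff_subset.trans (union_subset hpr.2 hqr.2)⟩

def ofHS (H : Set V) (hH : G.IsHS H) (hne : H.Nonempty) : G.APair :=
  ⟨H, ∅, hH.1, hH.2, fun _ hv => hv.elim, Or.inl hne⟩

end APair

variable {φ : G.ExtVertex → Ideal R} {I : Ideal R}

lemma le_phiPair_iff {p : G.APair} :
    I ≤ G.phiPair φ p ↔ (∀ u ∈ p.H, I ≤ φ (Sum.inl u)) ∧
      ∀ v (hv : v ∈ p.S), I ≤ φ (Sum.inr ⟨(p.H, v), p.isHS, p.breaking v hv⟩) := by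
  simp only [phiPair, le_inf_iff, le_iInf_iff, Subtype.forall]

lemma phiPair_sup (hφ : G.IsGradedIdealFun φ) (p q : G.APair) :
    G.phiPair φ (p ⊔ q) = G.phiPair φ p ⊓ G.phiPair φ q :=
  hφ.1 p q (p ⊔ q) rfl rfl

lemma phiPair_antitone (hφ : G.IsGradedIdealFun φ) : Antitone (G.phiPair φ) := fun p q hpq =>
  calc G.phiPair φ q = G.phiPair φ (q ⊔ p) := by rw [sup_eq_left.2 hpq]
    _ = G.phiPair φ q ⊓ G.phiPair φ p := phiPair_sup hφ q p
    _ ≤ G.phiPair φ p := inf_le_right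

lemma supClosed_setOf_le_phiPair (hφ : G.IsGradedIdealFun φ) (I : Ideal R) :
    SupClosed {p : G.APair | I ≤ G.phiPair φ p} :=
  fun p hp q hq => (le_inf hp hq).trans_eq (phiPair_sup hφ p q).symm

lemma exists_mem_upperBounds_le_phiPair (hφ : G.IsGradedIdealFun φ) {s : Set G.APair}
    (hfin : s.Finite) (hne : s.Nonempty) (hI : ∀ p ∈ s, I ≤ G.phiPair φ p) :
    ∃ J ∈ upperBounds s, I ≤ G.phiPair φ J :=
  ⟨hfin.toFinset.sup' (hfin.toFinset_nonempty.2 hne) id,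
    fun _ hp => Finset.le_sup' id (hfin.mem_toFinset.2 hp),
    (supClosed_setOf_le_phiPair hφ I).finsetSup'_mem _ fun p hp => hI p (hfin.mem_toFinset.1 hp)⟩

lemma le_phiPair_pairOfVertex (hφ : G.IsGradedIdealFun φ) {w : V} (hw : I ≤ φ (Sum.inl w)) :
    I ≤ G.phiPair φ (G.pairOfVertex w) :=
  le_phiPair_iff.2 ⟨fun u hu => hw.trans (hφ.2.1 w u (G.Hv_subset_s3 (G.Hv_isHS w) hu)),
    fun _ hv => hv.elim⟩

lemma isHereditary_setOf_le_phi (hφ : G.IsGradedIdealFun φ) (I : Ideal R) :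
    G.IsHereditary {u | I ≤ φ (Sum.inl u)} :=
  fun u w hu huw => hu.trans (hφ.2.1 u w (G.Hv_subset_of_reaches huw))

lemma isSaturated_setOf_le_phi (hφ : G.IsGradedIdealFun φ) (I : Ideal R) :
    G.IsSaturated {u | I ≤ φ (Sum.inl u)} := by
  intro v hreg hr
  obtain ⟨J, hJ, hIJ⟩ := exists_mem_upperBounds_le_phiPair hφ
    (hreg.1.image fun e => G.pairOfVertex (G.r e)) (hreg.2.image _)
    (by rintro _ ⟨e, he, rfl⟩; exact le_phiPair_pairOfVertex hφ (hr e he))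
  have hvJ : v ∈ J.H := J.sat hreg fun e he => (hJ ⟨e, he, rfl⟩).1 (G.mem_Hv _)
  exact (le_phiPair_iff.1 hIJ).1 v hvJ

lemma sClosed_setOf_le_phi (hφ : G.IsGradedIdealFun φ) {p : G.APair}
    (hp : I ≤ G.phiPair φ p) : G.SClosed p.S {u | I ≤ φ (Sum.inl u)} := by
  intro v hv hr
  obtain ⟨J, hJ, hIJ⟩ := exists_mem_upperBounds_le_phiPair hφ
    (((p.breaking v hv).2.2.1.image fun e => G.pairOfVertex (G.r e)).insert p)
    (insert_nonempty _ _)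
    (by rintro _ (rfl | ⟨e, he, rfl⟩); exacts [hp, le_phiPair_pairOfVertex hφ (hr e he.1)])
  have hpJ : p ≤ J := hJ (mem_insert _ _)
  have hvJ : v ∈ J.H := by
    refine J.sClosed_of_subset hpJ.2 v hv fun e he => ?_
    by_cases hre : G.r e ∈ p.H
    · exact hpJ.1 hre
    · exact (hJ (mem_insert_of_mem _ ⟨e, ⟨he, hre⟩, rfl⟩)).1 (G.mem_Hv _)
  exact (le_phiPair_iff.1 hIJ).1 v hvJ

lemma isHS_setOf_le_phi (hφ : G.IsGradedIdealFun φ) (I : Ideal R) :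
    G.IsHS {u | I ≤ φ (Sum.inl u)} :=
  ⟨isHereditary_setOf_le_phi hφ I, isSaturated_setOf_le_phi hφ I⟩

lemma le_phiPair_pairOfBreaking {p : G.APair} (hp : I ≤ G.phiPair φ p) {v : V}
    (hv : v ∈ p.S) : I ≤ G.phiPair φ (G.pairOfBreaking p.H v p.isHS (p.breaking v hv)) :=
  le_phiPair_iff.2 ⟨(le_phiPair_iff.1 hp).1, fun w hw => by
    cases (hw : w = v); exact (le_phiPair_iff.1 hp).2 v hv⟩

lemma le_phi_inr_of_le (hφ : G.IsGradedIdealFun φ) {p q : G.APair} (hpq : p ≤ q) {v : V}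
    (hvp : v ∈ p.S) (hvq : v ∈ q.S) (hp : I ≤ G.phiPair φ p)
    (hq : ∀ u ∈ q.H, I ≤ φ (Sum.inl u)) :
    I ≤ φ (Sum.inr ⟨(q.H, v), q.isHS, q.breaking v hvq⟩) := by
  have hbp := le_phiPair_pairOfBreaking hp hvp
  set b := G.pairOfBreaking q.H v q.isHS (q.breaking v hvq)
  set bp := G.pairOfBreaking p.H v p.isHS (p.breaking v hvp)
  suffices hb : I ≤ G.phiPair φ b from (le_phiPair_iff.1 hb).2 v rfl
  rcases q.H.eq_empty_or_nonempty with hq0 | hqne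
  · have hpq0 : p.H = q.H := hq0 ▸ subset_empty_iff.1 (hq0 ▸ hpq.1)
    rwa [show b = bp from APair.ext hpq0.symm rfl]
  · set c := APair.ofHS q.H q.isHS hqne
    have hb_le : b ≤ bp ⊔ c :=
      APair.le_def.2 ⟨(le_sup_right : c ≤ bp ⊔ c).1, (le_sup_left : bp ≤ bp ⊔ c).2⟩
    have hle_b : bp ⊔ c ≤ b :=
      sup_le (APair.le_def.2 ⟨hpq.1, subset_union_right⟩)
        (APair.le_def.2 ⟨subset_rfl, empty_subset _⟩)
    rw [hb_le.antisymm hle_b, phiPair_sup hφ]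
    exact le_inf hbp (le_phiPair_iff.2 ⟨hq, fun _ hv => hv.elim⟩)

end

/-- For a graded ideal function `φ`, the function
`f_φ((H,S)) = ⋂_{u∈H} φ(u) ∩ ⋂_{v∈S} φ(v^H)` is a saturated function. -/
theorem statement_3 (φ : G.ExtVertex → Ideal R) (hφ : G.IsGradedIdealFun φ) :
    G.IsSaturatedFun (G.satFunOf φ) := by
  intro ι P q hqH hqS
  have hPq (i : ι) : P i ≤ q :=
    APair.le_of_eq_sSat hqH hqS (subset_iUnion (fun i => (P i).H) i)
      (subset_iUnion (fun i => (P i).S) i)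
  refine le_antisymm (le_iInf fun i => phiPair_antitone hφ (hPq i)) ?_
  set I := ⨅ i, G.satFunOf φ (P i)
  have hI (i : ι) : I ≤ G.phiPair φ (P i) := iInf_le _ i
  have hqI : ∀ u ∈ q.H, I ≤ φ (Sum.inl u) := by
    rw [hqH]
    refine G.sSat_subset (iUnion_subset fun i => (le_phiPair_iff.1 (hI i)).1)
      (isHS_setOf_le_phi hφ I) fun v hv => ?_
    obtain ⟨i, hvi⟩ := mem_iUnion.1 hv
    exact sClosed_setOf_le_phi hφ (hI i) v hvi
  refine le_phiPair_iff.2 ⟨hqI, fun v hv => ?_⟩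
  obtain ⟨i, hvi⟩ := mem_iUnion.1 (hqS ▸ hv).1
  exact le_phi_inr_of_le hφ (hPq i) hvi hv (hI i) hqI

end Graph

end LPAQuot
end

section
/- Let E be a directed graph and R a unital commutative ring. For any graded ideal function φ : Ê⁰ → L(R), the graded ideal function associated to the saturated function f_φ coincides with φ; that is, φ_{f_φ} = φ, meaning f_φ((H_u,∅)) = φ(u) for every u ∈ E⁰ and f_φ((H,{v})) = φ(v^H) for every hereditary saturated H and v ∈ B_H. -/
namespace LPAQuot

namespace Graph

variable {V E R : Type} [CommRing R] (G : Graph V E)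

lemma Hv_subset_of_mem {u w : V} (hw : w ∈ G.Hv u) : G.Hv w ⊆ G.Hv u :=
  Set.sInter_subset_of_mem ⟨⟨G.Hv_hereditary u, G.Hv_saturated u⟩, hw⟩

lemma satFunOf_pairOfVertex {φ : G.ExtVertex → Ideal R}
    (hφ : ∀ u v : V, G.Hv v ⊆ G.Hv u → φ (Sum.inl u) ≤ φ (Sum.inl v)) (u : V) :
    G.satFunOf φ (G.pairOfVertex u) = φ (Sum.inl u) := by
  apply le_antisymm
  · exact inf_le_left.trans (iInf_le _ (⟨u, G.mem_Hv u⟩ : G.Hv u))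
  · exact le_inf (le_iInf fun w => hφ u w (G.Hv_subset_of_mem w.2))
      (le_iInf fun v => absurd v.2 (Set.notMem_empty _))

lemma satFunOf_pairOfBreaking {φ : G.ExtVertex → Ideal R} {H : Set V} {v : V}
    {hH : G.IsHS H} {hv : G.IsBreaking H v}
    (hφ : φ (Sum.inr ⟨(H, v), hH, hv⟩) ≤ ⨅ w : H, φ (Sum.inl w.1)) :
    G.satFunOf φ (G.pairOfBreaking H v hH hv) = φ (Sum.inr ⟨(H, v), hH, hv⟩) := by
  apply le_antisymm
  · exact inf_le_right.trans (iInf_le _ (⟨v, rfl⟩ : ({v} : Set V)))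
  · refine le_inf hφ (le_iInf fun ⟨w, hw⟩ => ?_)
    obtain rfl : w = v := hw
    exact le_rfl

/-- For a graded ideal function `φ`, one has `φ_{f_φ} = φ`:
`f_φ((H_u,∅)) = φ(u)` for every vertex `u` and `f_φ((H,{v})) = φ(v^H)` for every
hereditary saturated `H` and `v ∈ B_H`. -/
theorem statement_4 (φ : G.ExtVertex → Ideal R) (hφ : G.IsGradedIdealFun φ) :
    (∀ u : V, G.satFunOf φ (G.pairOfVertex u) = φ (Sum.inl u)) ∧
    (∀ (H : Set V) (hH : G.IsHS H) (v : V) (hv : G.IsBreaking H v),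
      G.satFunOf φ (G.pairOfBreaking H v hH hv) = φ (Sum.inr ⟨(H, v), hH, hv⟩)) := by
  obtain ⟨-, hmono, hbreaking⟩ := hφ
  exact ⟨G.satFunOf_pairOfVertex hmono,
    fun H hH v hv => G.satFunOf_pairOfBreaking (hbreaking H hH v hv)⟩

end Graph

end LPAQuot
end

section
/- Let E be a directed graph and R a unital commutative ring. For graded ideal functions φ₁, φ₂ : Ê⁰ → L(R), one has φ₁ ≤ φ₂ (i.e., φ₁(x) ⊆ φ₂(x) for all x ∈ Ê⁰) if and only if f_{φ₁} ≤ f_{φ₂} (i.e., f_{φ₁}((H,S)) ⊆ f_{φ₂}((H,S)) for all (H,S) ∈ T_E*); hence the correspondence φ ↦ f_φ is an isomorphism of partially ordered sets between graded ideal functions and saturated functions. -/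
/-!
On graded ideal functions, `f ↦ φ_f` is a left inverse of `φ ↦ f_φ`: evaluating `f_φ` at
`(H_u, ∅)` and at `(H, {v})` gives back `φ(u)` and `φ(v^H)`, by conditions (ii) and (iii).
Since both maps are monotone, `φ ↦ f_φ` reflects the order as well as preserving it.
-/

namespace LPAQuot

namespace Graph

variable {V E R : Type} [CommRing R] (G : Graph V E)

lemma satFunOf_mono : Monotone (G.satFunOf : (G.ExtVertex → Ideal R) → G.APair → Ideal R) :=
  fun _ _ h _ => inf_le_inf (iInf_mono fun _ => h _) (iInf_mono fun _ => h _)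

lemma phiOf_mono : Monotone (G.phiOf : (G.APair → Ideal R) → G.ExtVertex → Ideal R) := by
  rintro _ _ h (_ | _) <;> exact h _

lemma phiPair_pairOfVertex (φ : G.ExtVertex → Ideal R) (u : V)
    (hu : ∀ w ∈ G.Hv u, φ (Sum.inl u) ≤ φ (Sum.inl w)) :
    G.phiPair φ (G.pairOfVertex u) = φ (Sum.inl u) := by
  refine le_antisymm (inf_le_left.trans (iInf_le _ (⟨u, G.mem_Hv u⟩ : G.Hv u))) (le_inf ?_ ?_)
  · exact le_iInf fun w => hu w.1 w.2
  · exact le_iInf fun v => absurd v.2 (Set.notMem_empty v.1)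

lemma phiPair_pairOfBreaking (φ : G.ExtVertex → Ideal R) {H : Set V} {v : V} (hH : G.IsHS H)
    (hv : G.IsBreaking H v) (hφ : φ (Sum.inr ⟨(H, v), hH, hv⟩) ≤ ⨅ w : H, φ (Sum.inl w.1)) :
    G.phiPair φ (G.pairOfBreaking H v hH hv) = φ (Sum.inr ⟨(H, v), hH, hv⟩) := by
  refine le_antisymm (inf_le_right.trans (iInf_le _ (⟨v, rfl⟩ : ({v} : Set V)))) (le_inf hφ ?_)
  refine le_iInf fun w => ?_
  obtain ⟨w, rfl : w = v⟩ := w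
  exact le_rfl

theorem phiOf_satFunOf {φ : G.ExtVertex → Ideal R} (hφ : G.IsGradedIdealFun φ) :
    G.phiOf (G.satFunOf φ) = φ := by
  funext x
  rcases x with u | ⟨⟨H, v⟩, hH, hv⟩
  · exact G.phiPair_pairOfVertex φ u fun w hw => hφ.2.1 u w (G.Hv_subset_of_mem hw)
  · exact G.phiPair_pairOfBreaking φ hH hv (hφ.2.2 H hH v hv)

/-- For graded ideal functions `φ₁, φ₂`, one has `φ₁ ≤ φ₂` iff
`f_{φ₁} ≤ f_{φ₂}`; hence `φ ↦ f_φ` is an order isomorphism. -/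
theorem statement_7 (φ₁ φ₂ : G.ExtVertex → Ideal R)
    (h₁ : G.IsGradedIdealFun φ₁) (h₂ : G.IsGradedIdealFun φ₂) :
    (∀ x : G.ExtVertex, φ₁ x ≤ φ₂ x) ↔
      (∀ p : G.APair, G.satFunOf φ₁ p ≤ G.satFunOf φ₂ p) := by
  refine ⟨fun h => G.satFunOf_mono h, fun h => ?_⟩
  rw [← G.phiOf_satFunOf h₁, ← G.phiOf_satFunOf h₂]
  exact G.phiOf_mono h

end Graph

end LPAQuot
end
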